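/- arXiv:1904.08826 — 6 statements merged into one kernel-verified Lean document; each statement's English description precedes it below -/
import Mathlib

section
/- Let E be a real Banach space, τ > 0 and C ≥ 0. Let ψ : [0,τ] → E be continuous on [0,τ] and differentiable on [0,τ) with ‖ψ′(v)‖ ≤ C (1 + τ/(τ − v)) for all v ∈ [0,τ). Then ‖∫₀^τ ψ(s) ds − τ ψ(0)‖ ≤ (3/2) C τ². -/
/-!
Comparing `ψ` with the scalar majorant `C (s - τ log (τ - s))`, whose derivative is exactly the
bound `C (1 + τ / (τ - s))`, the fencing form of the mean value inequality gives
`‖ψ s - ψ 0‖ ≤ C (s + τ log (τ / (τ - s)))` on `[0, τ)`. The logarithmic singularity is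
integrable, and integrating this bound over `[0, τ]` gives `C (τ² / 2 + τ²)`.
-/

open Set MeasureTheory intervalIntegral Real

section NormedSpace

variable {E : Type*} [NormedAddCommGroup E] [NormedSpace ℝ E]

theorem norm_image_sub_le_sub_of_norm_deriv_le_deriv_Ico {f f' : ℝ → E} {B B' : ℝ → ℝ}
    {a b : ℝ} (hf : ∀ x ∈ Ico a b, HasDerivWithinAt f (f' x) (Ico a b) x)
    (hB : ∀ x ∈ Ico a b, HasDerivWithinAt B (B' x) (Ico a b) x)
    (bound : ∀ x ∈ Ico a b, ‖f' x‖ ≤ B' x) :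
    ∀ s ∈ Ico a b, ‖f s - f a‖ ≤ B s - B a := by
  intro s hs
  have hsub : Icc a s ⊆ Ico a b := Icc_subset_Ico_right hs.2
  have hnhds : ∀ x ∈ Ico a s, Ico a b ∈ nhdsWithin x (Ici x) := fun x hx =>
    Ico_mem_nhdsGE_of_mem ⟨hx.1, hx.2.trans hs.2⟩
  refine image_norm_le_of_norm_deriv_right_le_deriv_boundary' (f := fun x => f x - f a)
    (B := fun x => B x - B a) (fun x hx => ?_) (fun x hx => ?_) (by simp) (fun x hx => ?_)
    (fun x hx => ?_) (fun x hx => bound x (hsub (Ico_subset_Icc_self hx))) (right_mem_Icc.2 hs.1)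
  · exact ((hf x (hsub hx)).continuousWithinAt.mono hsub).sub continuousWithinAt_const
  · exact ((hf x (hsub (Ico_subset_Icc_self hx))).mono_of_mem_nhdsWithin (hnhds x hx)).sub_const _
  · exact ((hB x (hsub hx)).continuousWithinAt.mono hsub).sub continuousWithinAt_const
  · exact ((hB x (hsub (Ico_subset_Icc_self hx))).mono_of_mem_nhdsWithin (hnhds x hx)).sub_const _

theorem norm_integral_sub_smul_left_le [CompleteSpace E] {ψ : ℝ → E} {g : ℝ → ℝ} {a b : ℝ}
    (hab : a ≤ b) (hψ : IntervalIntegrable ψ volume a b) (hg : IntervalIntegrable g volume a b)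
    (h : ∀ s ∈ Ico a b, ‖ψ s - ψ a‖ ≤ g s) :
    ‖(∫ s in a..b, ψ s) - (b - a) • ψ a‖ ≤ ∫ s in a..b, g s := by
  rw [← intervalIntegral.integral_const, ← integral_sub hψ intervalIntegrable_const]
  refine norm_integral_le_of_norm_le hab ?_ hg
  filter_upwards [Ico_ae_eq_Ioc.mem_iff] with s hs hmem using h s (hs.2 hmem)

end NormedSpace

noncomputable def logBarrier (τ s : ℝ) : ℝ := s - τ * log (τ - s)

theorem hasDerivAt_logBarrier {τ x : ℝ} (hx : x < τ) :
    HasDerivAt (logBarrier τ) (1 + τ / (τ - x)) x := by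
  have h := (hasDerivAt_id' x).sub
    ((((hasDerivAt_id' x).const_sub τ).log (sub_ne_zero.2 hx.ne')).const_mul τ)
  exact h.congr_deriv (by ring)

theorem intervalIntegrable_log_sub (τ a b : ℝ) :
    IntervalIntegrable (fun s => log (τ - s)) volume a b := by
  simpa using (intervalIntegrable_log' (a := τ - a) (b := τ - b)).comp_sub_left τ

theorem intervalIntegrable_logBarrier (τ a b : ℝ) :
    IntervalIntegrable (logBarrier τ) volume a b :=
  intervalIntegrable_id.sub ((intervalIntegrable_log_sub τ a b).const_mul τ)

theorem integral_logBarrier_sub_logBarrier_zero (τ : ℝ) :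
    ∫ s in (0:ℝ)..τ, (logBarrier τ s - logBarrier τ 0) = 3 / 2 * τ ^ 2 := by
  have hlog : ∫ s in (0:ℝ)..τ, log (τ - s) = τ * log τ - τ := by
    simp [integral_comp_sub_left log τ (a := 0) (b := τ)]
  rw [integral_sub (intervalIntegrable_logBarrier τ 0 τ) intervalIntegrable_const,
    intervalIntegral.integral_const]
  unfold logBarrier
  rw [integral_sub intervalIntegrable_id ((intervalIntegrable_log_sub τ 0 τ).const_mul τ),
    intervalIntegral.integral_const_mul, integral_id, hlog]
  simp only [sub_zero, smul_eq_mul]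
  ring

theorem left_rectangle_error_general
    {E : Type*} [NormedAddCommGroup E] [NormedSpace ℝ E] [CompleteSpace E]
    (τ C : ℝ) (hτ : 0 < τ)
    (ψ ψ' : ℝ → E)
    (hcont : ContinuousOn ψ (Set.Icc (0:ℝ) τ))
    (hderiv : ∀ v ∈ Set.Ico (0:ℝ) τ, HasDerivWithinAt ψ (ψ' v) (Set.Ico (0:ℝ) τ) v)
    (hbound : ∀ v ∈ Set.Ico (0:ℝ) τ, ‖ψ' v‖ ≤ C * (1 + τ / (τ - v))) :
    ‖(∫ s in (0:ℝ)..τ, ψ s) - τ • ψ 0‖ ≤ 3 / 2 * C * τ ^ 2 := by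
  have hpointwise : ∀ s ∈ Ico 0 τ,
      ‖ψ s - ψ 0‖ ≤ C * logBarrier τ s - C * logBarrier τ 0 :=
    norm_image_sub_le_sub_of_norm_deriv_le_deriv_Ico hderiv
      (fun x hx => ((hasDerivAt_logBarrier hx.2).const_mul C).hasDerivWithinAt) hbound
  have hψ : IntervalIntegrable ψ volume 0 τ :=
    (hcont.mono (uIcc_of_le hτ.le).subset).intervalIntegrable
  calc ‖(∫ s in (0:ℝ)..τ, ψ s) - τ • ψ 0‖
      ≤ ∫ s in (0:ℝ)..τ, (C * logBarrier τ s - C * logBarrier τ 0) := by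
        simpa only [sub_zero] using norm_integral_sub_smul_left_le hτ.le hψ
          (((intervalIntegrable_logBarrier τ 0 τ).const_mul C).sub intervalIntegrable_const)
          hpointwise
    _ = 3 / 2 * C * τ ^ 2 := by
        simp_rw [← mul_sub]
        rw [intervalIntegral.integral_const_mul, integral_logBarrier_sub_logBarrier_zero]
        ring

theorem left_rectangle_error
    {E : Type*} [NormedAddCommGroup E] [NormedSpace ℝ E] [CompleteSpace E]
    (τ C : ℝ) (hτ : 0 < τ) (hC : 0 ≤ C)
    (ψ ψ' : ℝ → E)
    (hcont : ContinuousOn ψ (Set.Icc (0:ℝ) τ))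
    (hderiv : ∀ v ∈ Set.Ico (0:ℝ) τ, HasDerivWithinAt ψ (ψ' v) (Set.Ico (0:ℝ) τ) v)
    (hbound : ∀ v ∈ Set.Ico (0:ℝ) τ, ‖ψ' v‖ ≤ C * (1 + τ / (τ - v))) :
    ‖(∫ s in (0:ℝ)..τ, ψ s) - τ • ψ 0‖ ≤ 3 / 2 * C * τ ^ 2 :=
  left_rectangle_error_general τ C hτ ψ ψ' hcont hderiv hbound
end

section
/- Fix C ≥ 0, m ∈ ℕ, weights b_1,…,b_m ∈ ℝ with Σ_{k=1}^m b_k = 1 and Σ_{k=1}^m b_k c_k = 1/2, and nodes c_1,…,c_m ∈ [0,1]. There is a constant K, depending only on C and the weights, such that for every real Banach space E, every τ with 0 < τ ≤ 1, and every function ψ : [0,τ] → E that is continuous on [0,τ], twice continuously differentiable on [0,τ), and satisfies ‖ψ″(v)‖ ≤ C (1 + 1/(τ − v)) for all v ∈ [0,τ), one has ‖∫₀^τ ψ(s) ds − τ Σ_{k=1}^m b_k ψ(τ c_k)‖ ≤ K τ². -/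
/-!
The rule integrates affine functions exactly, so its error on `ψ` equals its error on the
first-order Taylor remainder `R v = ψ v - ψ 0 - v • ψ' 0`, and it suffices to show
`‖R v‖ = O(τ)` on `[0, τ]`. For `v < τ`, the function `s ↦ ψ s + (v - s) • ψ' s` has
derivative `(v - s) • ψ'' s` and takes the values `ψ 0 + v • ψ' 0` and `ψ v` at the ends of
`[0, v]`. The factor `v - s` tames the singularity of `ψ''`, since `(v - s) / (τ - s) ≤ 1`, so
the mean value inequality bounds `‖R v‖` by `C (τ + 1) v`. Continuity of `ψ` carries the bound
to `v = τ`.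
-/

open Set MeasureTheory

section

variable {E : Type*} [NormedAddCommGroup E] [NormedSpace ℝ E]

theorem norm_sub_sub_smul_le_of_mul_norm_deriv2_le {ψ ψ' ψ'' : ℝ → E} {a b B : ℝ}
    (hab : a ≤ b)
    (hψ : ∀ s ∈ Icc a b, HasDerivWithinAt ψ (ψ' s) (Icc a b) s)
    (hψ' : ∀ s ∈ Icc a b, HasDerivWithinAt ψ' (ψ'' s) (Icc a b) s)
    (hB : ∀ s ∈ Ico a b, (b - s) * ‖ψ'' s‖ ≤ B) :
    ‖ψ b - ψ a - (b - a) • ψ' a‖ ≤ B * (b - a) := by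
  have hF : ∀ s ∈ Icc a b, HasDerivWithinAt (fun s => ψ s + (b - s) • ψ' s)
      ((b - s) • ψ'' s) (Icc a b) s := fun s hs => by
    have := (hψ s hs).add
      (((hasDerivWithinAt_id s _).const_sub b).smul (hψ' s hs))
    simp only [id, neg_smul, one_smul] at this
    exact this.congr_deriv (by abel)
  have hF' : ∀ s ∈ Ico a b, ‖(b - s) • ψ'' s‖ ≤ B := fun s hs => by
    rw [norm_smul, Real.norm_of_nonneg (sub_nonneg.2 hs.2.le)]
    exact hB s hs
  have := norm_image_sub_le_of_norm_deriv_le_segment' hF hF' b (right_mem_Icc.2 hab)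
  simpa [sub_add_eq_sub_sub] using this

theorem norm_taylor_remainder_le_of_norm_deriv2_le_singular {ψ ψ' ψ'' : ℝ → E} {C τ : ℝ}
    (hC : 0 ≤ C) (hτ : 0 < τ) (hψc : ContinuousOn ψ (Icc 0 τ))
    (hψ : ∀ v ∈ Ico 0 τ, HasDerivWithinAt ψ (ψ' v) (Ico 0 τ) v)
    (hψ' : ∀ v ∈ Ico 0 τ, HasDerivWithinAt ψ' (ψ'' v) (Ico 0 τ) v)
    (hbound : ∀ v ∈ Ico 0 τ, ‖ψ'' v‖ ≤ C * (1 + 1 / (τ - v))) :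
    ∀ v ∈ Icc 0 τ, ‖ψ v - ψ 0 - v • ψ' 0‖ ≤ C * (τ + 1) * τ := by
  have hlt : ∀ v ∈ Ico 0 τ, ‖ψ v - ψ 0 - v • ψ' 0‖ ≤ C * (τ + 1) * τ := by
    intro v hv
    have hsub : Icc 0 v ⊆ Ico 0 τ := Icc_subset_Ico_right hv.2
    have hB : ∀ s ∈ Ico 0 v, (v - s) * ‖ψ'' s‖ ≤ C * (τ + 1) := by
      intro s hs
      have hτs : 0 < τ - s := by linarith [hs.2, hv.2]
      have hfrac : (v - s) * (1 / (τ - s)) ≤ 1 := by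
        rw [mul_one_div, div_le_one hτs]
        linarith [hv.2]
      calc (v - s) * ‖ψ'' s‖ ≤ (v - s) * (C * (1 + 1 / (τ - s))) :=
            mul_le_mul_of_nonneg_left (hbound s (hsub (Ico_subset_Icc_self hs)))
              (sub_nonneg.2 hs.2.le)
        _ = C * ((v - s) + (v - s) * (1 / (τ - s))) := by ring
        _ ≤ C * (τ + 1) := by gcongr; linarith [hs.1, hv.2]
    have := norm_sub_sub_smul_le_of_mul_norm_deriv2_le hv.1
      (fun s hs => (hψ s (hsub hs)).mono hsub) (fun s hs => (hψ' s (hsub hs)).mono hsub) hB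
    rw [sub_zero] at this
    exact this.trans (by gcongr; exact hv.2.le)
  intro v hv
  refine ContinuousWithinAt.closure_le (f := fun v => ‖ψ v - ψ 0 - v • ψ' 0‖)
    (by rwa [closure_Ico hτ.ne]) ?_ continuousWithinAt_const hlt
  exact (((hψc v hv).mono Ico_subset_Icc_self).sub continuousWithinAt_const).sub
    (continuousWithinAt_id.smul continuousWithinAt_const) |>.norm

variable {m : ℕ} (b c : Fin m → ℝ) (τ : ℝ)

noncomputable def quadratureError (f : ℝ → E) : E :=
  (∫ s in (0:ℝ)..τ, f s) - τ • ∑ k, b k • f (τ * c k)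

variable {b c τ}

theorem quadratureError_sub {f g : ℝ → E} (hf : IntervalIntegrable f volume 0 τ)
    (hg : IntervalIntegrable g volume 0 τ) :
    quadratureError b c τ (fun s => f s - g s) =
      quadratureError b c τ f - quadratureError b c τ g := by
  simp only [quadratureError, intervalIntegral.integral_sub hf hg, smul_sub, Finset.sum_sub_distrib]
  abel

theorem quadratureError_affine [CompleteSpace E] (hb1 : ∑ k, b k = 1)
    (hb2 : ∑ k, b k * c k = 1 / 2) (x y : E) :
    quadratureError b c τ (fun s => x + s • y) = 0 := by
  have hsum : ∑ k, b k • (x + (τ * c k) • y) = x + (τ / 2) • y := by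
    simp only [smul_add, smul_smul, Finset.sum_add_distrib, ← Finset.sum_smul, hb1, one_smul,
      mul_left_comm (b _) τ, ← Finset.mul_sum, hb2]
    ring_nf
  have hint : ∫ s in (0:ℝ)..τ, x + s • y = τ • x + (τ ^ 2 / 2) • y := by
    rw [intervalIntegral.integral_add (f := fun _ => x) (g := fun s : ℝ => s • y)
      intervalIntegrable_const ((continuous_id.smul continuous_const).intervalIntegrable _ _),
      intervalIntegral.integral_const, intervalIntegral.integral_smul_const, integral_id]
    simp
  rw [quadratureError, hsum, hint, smul_add, smul_smul]
  ring_nf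
  simp

theorem norm_quadratureError_le {f : ℝ → E} {M : ℝ} (hτ : 0 ≤ τ)
    (hc : ∀ k, c k ∈ Icc (0:ℝ) 1) (hf : ∀ s ∈ Icc 0 τ, ‖f s‖ ≤ M) :
    ‖quadratureError b c τ f‖ ≤ (1 + ∑ k, |b k|) * M * τ := by
  have hint : ‖∫ s in (0:ℝ)..τ, f s‖ ≤ M * τ := by
    have := intervalIntegral.norm_integral_le_of_norm_le_const
      (fun s hs => hf s (by rw [uIoc_of_le hτ] at hs; exact Ioc_subset_Icc_self hs))
    rwa [sub_zero, abs_of_nonneg hτ] at this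
  have hnode : ∀ k, τ * c k ∈ Icc 0 τ := fun k =>
    ⟨mul_nonneg hτ (hc k).1, mul_le_of_le_one_right hτ (hc k).2⟩
  have hsum : ‖∑ k, b k • f (τ * c k)‖ ≤ (∑ k, |b k|) * M := by
    rw [Finset.sum_mul]
    refine (norm_sum_le _ _).trans (Finset.sum_le_sum fun k _ => ?_)
    rw [norm_smul, Real.norm_eq_abs]
    exact mul_le_mul_of_nonneg_left (hf _ (hnode k)) (abs_nonneg _)
  calc ‖quadratureError b c τ f‖
      ≤ ‖∫ s in (0:ℝ)..τ, f s‖ + τ * ‖∑ k, b k • f (τ * c k)‖ := by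
        rw [quadratureError]
        refine (norm_sub_le _ _).trans_eq ?_
        rw [norm_smul, Real.norm_of_nonneg hτ]
    _ ≤ M * τ + τ * ((∑ k, |b k|) * M) := by gcongr
    _ = (1 + ∑ k, |b k|) * M * τ := by ring

end

theorem second_order_quadrature_tau_sq
    (C : ℝ) (hC : 0 ≤ C)
    (m : ℕ) (b c : Fin m → ℝ)
    (hb1 : ∑ k, b k = 1) (hb2 : ∑ k, b k * c k = 1 / 2)
    (hc : ∀ k, c k ∈ Set.Icc (0:ℝ) 1) :
    ∃ K : ℝ,
      ∀ (E : Type*) [NormedAddCommGroup E] [NormedSpace ℝ E] [CompleteSpace E]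
        (τ : ℝ), 0 < τ → τ ≤ 1 →
      ∀ (ψ ψ' ψ'' : ℝ → E),
      ContinuousOn ψ (Set.Icc (0:ℝ) τ) →
      (∀ v ∈ Set.Ico (0:ℝ) τ, HasDerivWithinAt ψ (ψ' v) (Set.Ico (0:ℝ) τ) v) →
      (∀ v ∈ Set.Ico (0:ℝ) τ, HasDerivWithinAt ψ' (ψ'' v) (Set.Ico (0:ℝ) τ) v) →
      ContinuousOn ψ' (Set.Ico (0:ℝ) τ) →
      ContinuousOn ψ'' (Set.Ico (0:ℝ) τ) →
      (∀ v ∈ Set.Ico (0:ℝ) τ, ‖ψ'' v‖ ≤ C * (1 + 1 / (τ - v))) →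
      ‖(∫ s in (0:ℝ)..τ, ψ s) - τ • ∑ k, b k • ψ (τ * c k)‖ ≤ K * τ ^ 2 := by
  refine ⟨2 * C * (1 + ∑ k, |b k|), ?_⟩
  intro E _ _ _ τ hτ hτ1 ψ ψ' ψ'' hψc hψ hψ' _ _ hbound
  set R : ℝ → E := fun s => ψ s - (ψ 0 + s • ψ' 0)
  have hR : ∀ v ∈ Icc 0 τ, ‖R v‖ ≤ C * (τ + 1) * τ := fun v hv => by
    simpa only [R, sub_add_eq_sub_sub] using
      norm_taylor_remainder_le_of_norm_deriv2_le_singular hC hτ hψc hψ hψ' hbound v hv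
  have hRerr : quadratureError b c τ R = quadratureError b c τ ψ := by
    rw [quadratureError_sub (g := fun s => ψ 0 + s • ψ' 0)
      (hψc.intervalIntegrable_of_Icc hτ.le)
      ((continuous_const.add (continuous_id.smul continuous_const)).intervalIntegrable _ _),
      quadratureError_affine hb1 hb2, sub_zero]
  calc ‖quadratureError b c τ ψ‖ = ‖quadratureError b c τ R‖ := by rw [hRerr]
    _ ≤ (1 + ∑ k, |b k|) * (C * (τ + 1) * τ) * τ := norm_quadratureError_le hτ.le hc hR
    _ = C * (1 + ∑ k, |b k|) * (τ + 1) * τ ^ 2 := by ring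
    _ ≤ C * (1 + ∑ k, |b k|) * 2 * τ ^ 2 := by gcongr; linarith
    _ = 2 * C * (1 + ∑ k, |b k|) * τ ^ 2 := by ring
end

section
/- Fix C ≥ 0, m ∈ ℕ, weights b_1,…,b_m ∈ ℝ with Σ_{k=1}^m b_k = 1 and Σ_{k=1}^m b_k c_k = 1/2, and nodes c_1,…,c_m ∈ [0,1]. There is a constant K, depending only on C and the weights, such that for every real Banach space E, every τ with 0 < τ ≤ 1, and every function ψ : [0,τ] → E that is continuous on [0,τ], twice continuously differentiable on [0,τ), and satisfies ‖ψ″(v)‖ ≤ C (1 + τ/(τ − v)) for all v ∈ [0,τ), one has ‖∫₀^τ ψ(s) ds − τ Σ_{k=1}^m b_k ψ(τ c_k)‖ ≤ K τ³. -/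
/- STATEMENT 9: a second-order quadrature formula has error O(τ³) under the
   refined second-derivative bound ‖ψ″(v)‖ ≤ C(1 + τ/(τ − v)). -/
theorem second_order_quadrature_tau_cube
    (C : ℝ) (hC : 0 ≤ C)
    (m : ℕ) (b c : Fin m → ℝ)
    (hb1 : ∑ k, b k = 1) (hb2 : ∑ k, b k * c k = 1 / 2)
    (hc : ∀ k, c k ∈ Set.Icc (0:ℝ) 1) :
    ∃ K : ℝ,
      ∀ (E : Type*) [NormedAddCommGroup E] [NormedSpace ℝ E] [CompleteSpace E]
        (τ : ℝ), 0 < τ → τ ≤ 1 →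
      ∀ (ψ ψ' ψ'' : ℝ → E),
      ContinuousOn ψ (Set.Icc (0:ℝ) τ) →
      (∀ v ∈ Set.Ico (0:ℝ) τ, HasDerivWithinAt ψ (ψ' v) (Set.Ico (0:ℝ) τ) v) →
      (∀ v ∈ Set.Ico (0:ℝ) τ, HasDerivWithinAt ψ' (ψ'' v) (Set.Ico (0:ℝ) τ) v) →
      ContinuousOn ψ' (Set.Ico (0:ℝ) τ) →
      ContinuousOn ψ'' (Set.Ico (0:ℝ) τ) →
      (∀ v ∈ Set.Ico (0:ℝ) τ, ‖ψ'' v‖ ≤ C * (1 + τ / (τ - v))) →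
      ‖(∫ s in (0:ℝ)..τ, ψ s) - τ • ∑ k, b k • ψ (τ * c k)‖ ≤ K * τ ^ 3 := by
  classical
  refine ⟨2 * C * (1 + ∑ k, |b k|), ?_⟩
  intro E _ _ _ τ hτ hτ1 ψ ψ' ψ'' hψc hd1 hd2 hc1 hc2 hbnd
  set R : ℝ → E := fun x => ψ x - ψ 0 - x • ψ' 0 with hRdef
  -- derivatives at interior points are honest derivatives
  have hIco_nhds : ∀ x ∈ Set.Ioo (0:ℝ) τ, Set.Ico (0:ℝ) τ ∈ nhds x := by
    intro x hx
    exact Ico_mem_nhds hx.1 hx.2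
  have hD1 : ∀ x ∈ Set.Ioo (0:ℝ) τ, HasDerivAt ψ (ψ' x) x := fun x hx =>
    (hd1 x ⟨le_of_lt hx.1, hx.2⟩).hasDerivAt (hIco_nhds x hx)
  have hD2 : ∀ x ∈ Set.Ioo (0:ℝ) τ, HasDerivAt ψ' (ψ'' x) x := fun x hx =>
    (hd2 x ⟨le_of_lt hx.1, hx.2⟩).hasDerivAt (hIco_nhds x hx)
  -- Taylor formula with integral remainder, for s ∈ [0, τ)
  have key : ∀ s ∈ Set.Ico (0:ℝ) τ,
      R s = ∫ u in (0:ℝ)..s, (s - u) • ψ'' u := by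
    intro s hs
    obtain ⟨hs0, hsτ⟩ := hs
    have hIccsub : Set.Icc (0:ℝ) s ⊆ Set.Ico (0:ℝ) τ := fun x hx =>
      ⟨hx.1, lt_of_le_of_lt hx.2 hsτ⟩
    have hIccsub' : Set.Icc (0:ℝ) s ⊆ Set.Icc (0:ℝ) τ := fun x hx =>
      ⟨hx.1, le_trans hx.2 (le_of_lt hsτ)⟩
    -- W u = ψ u + (s - u) • ψ' u
    have hcontW : ContinuousOn (fun u => ψ u + (s - u) • ψ' u) (Set.Icc (0:ℝ) s) := by
      refine (hψc.mono hIccsub').add (ContinuousOn.smul ?_ (hc1.mono hIccsub))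
      exact (continuousOn_const.sub continuousOn_id)
    have hderivW : ∀ u ∈ Set.Ioo (0:ℝ) s,
        HasDerivWithinAt (fun u => ψ u + (s - u) • ψ' u) ((s - u) • ψ'' u)
          (Set.Ioi u) u := by
      intro u hu
      have hu' : u ∈ Set.Ioo (0:ℝ) τ := ⟨hu.1, lt_trans hu.2 hsτ⟩
      have h1 : HasDerivAt (fun u : ℝ => s - u) (-1) u := by
        simpa using (hasDerivAt_id u).const_sub s
      have h2 : HasDerivAt (fun u => ψ u + (s - u) • ψ' u)
          (ψ' u + ((s - u) • ψ'' u + (-1 : ℝ) • ψ' u)) u :=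
        (hD1 u hu').add (h1.smul (hD2 u hu'))
      have h3 : ψ' u + ((s - u) • ψ'' u + (-1 : ℝ) • ψ' u) = (s - u) • ψ'' u := by
        simp [neg_one_smul]
      rw [h3] at h2
      exact h2.hasDerivWithinAt
    have hint : IntervalIntegrable (fun u => (s - u) • ψ'' u) MeasureTheory.volume 0 s := by
      apply ContinuousOn.intervalIntegrable
      rw [Set.uIcc_of_le hs0]
      exact ContinuousOn.smul (continuousOn_const.sub continuousOn_id) (hc2.mono hIccsub)
    have := intervalIntegral.integral_eq_sub_of_hasDeriv_right_of_le hs0 hcontW hderivW hint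
    rw [this]
    simp [hRdef]
    abel
  -- uniform bound for the remainder on [0, τ)
  have hRb : ∀ s ∈ Set.Ico (0:ℝ) τ, ‖R s‖ ≤ 2 * C * τ ^ 2 := by
    intro s hs
    obtain ⟨hs0, hsτ⟩ := hs
    rw [key s ⟨hs0, hsτ⟩]
    have hb : ∀ u ∈ Set.uIoc (0:ℝ) s, ‖(s - u) • ψ'' u‖ ≤ 2 * C * τ := by
      intro u hu
      rw [Set.uIoc_of_le hs0] at hu
      have hu0 : 0 < u := hu.1
      have hus : u ≤ s := hu.2
      have huτ : u < τ := lt_of_le_of_lt hus hsτ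
      have hb1 : ‖ψ'' u‖ ≤ C * (1 + τ / (τ - u)) := hbnd u ⟨le_of_lt hu0, huτ⟩
      have htu : (0:ℝ) < τ - u := by linarith
      have hfrac : (s - u) / (τ - u) ≤ 1 := by
        rw [div_le_one htu]; linarith
      have h2 : (s - u) * (τ / (τ - u)) ≤ τ := by
        have : (s - u) * (τ / (τ - u)) = τ * ((s - u) / (τ - u)) := by ring
        rw [this]
        nlinarith
      rw [norm_smul, Real.norm_eq_abs, abs_of_nonneg (by linarith : (0:ℝ) ≤ s - u)]
      have hnn : (0:ℝ) ≤ s - u := by linarith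
      calc (s - u) * ‖ψ'' u‖ ≤ (s - u) * (C * (1 + τ / (τ - u))) :=
            mul_le_mul_of_nonneg_left hb1 hnn
        _ = C * (s - u) + C * ((s - u) * (τ / (τ - u))) := by ring
        _ ≤ C * τ + C * τ := by
            have h1 : s - u ≤ τ := by linarith
            have := mul_le_mul_of_nonneg_left h1 hC
            have := mul_le_mul_of_nonneg_left h2 hC
            linarith
        _ = 2 * C * τ := by ring
    calc ‖∫ u in (0:ℝ)..s, (s - u) • ψ'' u‖ ≤ 2 * C * τ * |s - 0| :=
          intervalIntegral.norm_integral_le_of_norm_le_const hb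
      _ ≤ 2 * C * τ * τ := by
          rw [sub_zero, abs_of_nonneg hs0]
          have : (0:ℝ) ≤ 2 * C * τ := by positivity
          nlinarith
      _ = 2 * C * τ ^ 2 := by ring
  -- R is continuous on [0, τ]
  have hRcont : ContinuousOn R (Set.Icc (0:ℝ) τ) := by
    apply (hψc.sub continuousOn_const).sub
    exact ContinuousOn.smul continuousOn_id continuousOn_const
  -- extend the bound to [0, τ]
  have hRb' : ∀ s ∈ Set.Icc (0:ℝ) τ, ‖R s‖ ≤ 2 * C * τ ^ 2 := by
    intro s hs
    rcases lt_or_eq_of_le hs.2 with h | h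
    · exact hRb s ⟨hs.1, h⟩
    · subst h
      have hne : (nhdsWithin s (Set.Ico (0:ℝ) s)).NeBot := by
        rw [← mem_closure_iff_nhdsWithin_neBot, closure_Ico hτ.ne]
        exact ⟨le_of_lt hτ, le_refl s⟩
      have htend : Filter.Tendsto (fun x => ‖R x‖) (nhdsWithin s (Set.Ico (0:ℝ) s))
          (nhds ‖R s‖) := by
        have h1 : ContinuousWithinAt R (Set.Icc (0:ℝ) s) s :=
          hRcont.continuousWithinAt hs
        exact (h1.mono Set.Ico_subset_Icc_self).norm
      refine le_of_tendsto htend ?_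
      filter_upwards [self_mem_nhdsWithin] with x hx
      exact hRb x hx
  -- decompose ψ
  have hψeq : ∀ x : ℝ, ψ x = ψ 0 + x • ψ' 0 + R x := by
    intro x; simp [hRdef]
  -- integrability facts
  have hRint : IntervalIntegrable R MeasureTheory.volume 0 τ := by
    have h := hRcont
    rw [← Set.uIcc_of_le (le_of_lt hτ)] at h
    exact h.intervalIntegrable
  have hlin : IntervalIntegrable (fun x : ℝ => x • ψ' 0) MeasureTheory.volume 0 τ :=
    ((continuous_id.smul continuous_const).intervalIntegrable 0 τ)
  have hconst : IntervalIntegrable (fun _ : ℝ => ψ 0) MeasureTheory.volume 0 τ :=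
    intervalIntegrable_const
  -- compute the integral
  have hIψ : (∫ s in (0:ℝ)..τ, ψ s)
      = τ • ψ 0 + (τ ^ 2 / 2) • ψ' 0 + ∫ s in (0:ℝ)..τ, R s := by
    have h1 : (∫ s in (0:ℝ)..τ, ψ s)
        = ∫ s in (0:ℝ)..τ, (ψ 0 + s • ψ' 0 + R s) := by
      apply intervalIntegral.integral_congr
      intro x _
      exact hψeq x
    rw [h1, intervalIntegral.integral_add (hconst.add hlin) hRint,
      intervalIntegral.integral_add hconst hlin]
    congr 1
    congr 1
    · simp
    · rw [intervalIntegral.integral_smul_const, integral_id]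
      norm_num
  -- compute the quadrature sum
  have hnodes : ∀ k, τ * c k ∈ Set.Icc (0:ℝ) τ := by
    intro k
    constructor
    · exact mul_nonneg (le_of_lt hτ) (hc k).1
    · calc τ * c k ≤ τ * 1 := mul_le_mul_of_nonneg_left (hc k).2 (le_of_lt hτ)
        _ = τ := mul_one τ
  have hSum : (∑ k, b k • ψ (τ * c k))
      = ψ 0 + (τ / 2) • ψ' 0 + ∑ k, b k • R (τ * c k) := by
    have h1 : ∀ k : Fin m, b k • ψ (τ * c k)
        = b k • ψ 0 + (b k * (τ * c k)) • ψ' 0 + b k • R (τ * c k) := by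
      intro k
      rw [hψeq (τ * c k)]
      rw [smul_add, smul_add, smul_smul]
    rw [Finset.sum_congr rfl (fun k _ => h1 k)]
    rw [Finset.sum_add_distrib, Finset.sum_add_distrib]
    congr 1
    congr 1
    · rw [← Finset.sum_smul, hb1, one_smul]
    · rw [← Finset.sum_smul]
      congr 1
      have : (∑ k, b k * (τ * c k)) = τ * ∑ k, b k * c k := by
        rw [Finset.mul_sum]
        exact Finset.sum_congr rfl (fun k _ => by ring)
      rw [this, hb2]; ring
  -- final estimate
  have hdiff : (∫ s in (0:ℝ)..τ, ψ s) - τ • ∑ k, b k • ψ (τ * c k)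
      = (∫ s in (0:ℝ)..τ, R s) - τ • ∑ k, b k • R (τ * c k) := by
    rw [hIψ, hSum]
    rw [smul_add, smul_add, smul_smul]
    have : τ * (τ / 2) = τ ^ 2 / 2 := by ring
    rw [this]
    abel
  rw [hdiff]
  have hInorm : ‖∫ s in (0:ℝ)..τ, R s‖ ≤ 2 * C * τ ^ 2 * τ := by
    calc ‖∫ s in (0:ℝ)..τ, R s‖ ≤ 2 * C * τ ^ 2 * |τ - 0| := by
          apply intervalIntegral.norm_integral_le_of_norm_le_const
          intro x hx
          rw [Set.uIoc_of_le (le_of_lt hτ)] at hx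
          exact hRb' x ⟨le_of_lt hx.1, hx.2⟩
      _ = 2 * C * τ ^ 2 * τ := by rw [sub_zero, abs_of_nonneg (le_of_lt hτ)]
  have hSnorm : ‖∑ k, b k • R (τ * c k)‖ ≤ (∑ k, |b k|) * (2 * C * τ ^ 2) := by
    calc ‖∑ k, b k • R (τ * c k)‖ ≤ ∑ k, ‖b k • R (τ * c k)‖ := norm_sum_le _ _
      _ ≤ ∑ k, |b k| * (2 * C * τ ^ 2) := by
          apply Finset.sum_le_sum
          intro k _
          rw [norm_smul, Real.norm_eq_abs]
          exact mul_le_mul_of_nonneg_left (hRb' _ (hnodes k)) (abs_nonneg _)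
      _ = (∑ k, |b k|) * (2 * C * τ ^ 2) := by rw [← Finset.sum_mul]
  calc ‖(∫ s in (0:ℝ)..τ, R s) - τ • ∑ k, b k • R (τ * c k)‖
      ≤ ‖∫ s in (0:ℝ)..τ, R s‖ + ‖τ • ∑ k, b k • R (τ * c k)‖ := norm_sub_le _ _
    _ ≤ 2 * C * τ ^ 2 * τ + τ * ((∑ k, |b k|) * (2 * C * τ ^ 2)) := by
        have : ‖τ • ∑ k, b k • R (τ * c k)‖
            = τ * ‖∑ k, b k • R (τ * c k)‖ := by
          rw [norm_smul, Real.norm_eq_abs, abs_of_nonneg (le_of_lt hτ)]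
        rw [this]
        exact add_le_add hInorm (mul_le_mul_of_nonneg_left hSnorm (le_of_lt hτ))
    _ = 2 * C * (1 + ∑ k, |b k|) * τ ^ 3 := by ring
end

section
/- Fix T₀ > 0 and M, C, L ≥ 0. There is a constant K, depending only on M, C, L and T₀, such that the following holds. Let E be a real Banach space, let T : [0,T₀] → L(E) be a family of bounded linear operators with T_0 = I, T_{s+t} = T_s ∘ T_t whenever s, t, s+t ∈ [0,T₀], and ‖T_t‖ ≤ M for all t ∈ [0,T₀]; let A : E → E be a bounded linear operator with A(T_t x) = T_t(A x) for all t, x, and ‖A ∘ T_t‖ ≤ C/t for all t ∈ (0,T₀]. Let 0 < τ ≤ min(1, T₀), and let (e_n), (E_n), (h_n), (r_n) be sequences in E with e_0 = 0 and e_{n+1} = T_τ(e_n) + E_n + A(h_{n+1}) + r_{n+1} for all n, where ‖E_n‖ ≤ L τ ‖e_n‖, ‖h_n‖ ≤ C τ², ‖r_n‖ ≤ C τ², and ‖A(h_n) + r_n‖ ≤ C τ for all n. Then ‖e_n‖ ≤ K τ (1 + |log τ|) for every n with n τ ≤ T₀. -/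
/-!
Unrolling the recursion gives the discrete Duhamel formula
`e_n = ∑_{k<n} T_{kτ} (E_{n-1-k} + A h_{n-k} + r_{n-k})`, using `T_τ ^ k = T_{kτ}`.
The stability terms contribute `M L τ ∑_{j<n} ‖e_j‖`. The local error entering last (`k = 0`)
is `O(τ)`; every earlier one has been smoothed by `T_{kτ}`, so `‖A T_{kτ} h‖ ≤ C / (kτ) · C τ²`
and these sum to `C² τ` times a harmonic sum, bounded by `1 + log n ≤ 1 + log (T₀ / τ)`.
The discrete Grönwall inequality then absorbs the stability terms into a factor `exp (M L T₀)`.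
-/

open Finset Real

theorem map_natCast_mul_eq_pow {G : Type*} [Monoid G] {T : ℝ → G} {T₀ τ : ℝ} (h0 : T 0 = 1)
    (hadd : ∀ s t : ℝ, 0 ≤ s → 0 ≤ t → s + t ≤ T₀ → T (s + t) = T s * T t) (hτ : 0 ≤ τ)
    {m : ℕ} (hm : m * τ ≤ T₀) : T (m * τ) = T τ ^ m := by
  induction m with
  | zero => simpa using h0
  | succ m ih =>
    push_cast at hm ⊢
    rw [add_mul, one_mul, add_comm, hadd τ (m * τ) hτ (by positivity) (by linarith),
      ih (by linarith), pow_succ']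

theorem eq_sum_pow_smul_of_eq_smul_add {G V : Type*} [Monoid G] [AddCommMonoid V]
    [DistribMulAction G V] {S : G} {e d : ℕ → V} (h0 : e 0 = 0)
    (hrec : ∀ n, e (n + 1) = S • e n + d n) (n : ℕ) :
    e n = ∑ k ∈ range n, S ^ k • d (n - 1 - k) := by
  induction n with
  | zero => simp [h0]
  | succ n ih =>
    rw [hrec, ih, smul_sum, sum_range_succ']
    simp only [pow_succ', mul_smul, pow_zero, one_smul, add_tsub_cancel_right, tsub_zero]
    congr 2 with k
    rw [Nat.sub_sub, add_comm 1 k]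

theorem le_mul_exp_of_le_mul_sum_add {u : ℕ → ℝ} {a R : ℝ} (ha : 0 ≤ a) (hR : 0 ≤ R) {N : ℕ}
    (hu : ∀ n ≤ N, u n ≤ a * ∑ k ∈ range n, u k + R) : u N ≤ R * exp (a * N) := by
  have hpow : ∀ n ≤ N, u n ≤ R * (1 + a) ^ n := by
    intro n
    induction n using Nat.strong_induction_on with
    | _ n ih =>
      intro hn
      have hsum : ∑ k ∈ range n, u k ≤ R * ∑ k ∈ range n, (1 + a) ^ k := by
        rw [mul_sum]
        exact sum_le_sum fun k hk => ih k (mem_range.mp hk) (by linarith [mem_range.mp hk])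
      calc u n ≤ a * ∑ k ∈ range n, u k + R := hu n hn
        _ ≤ a * (R * ∑ k ∈ range n, (1 + a) ^ k) + R := by gcongr
        _ = R * (1 + a) ^ n := by
          have := geom_sum_mul (1 + a) n
          rw [add_sub_cancel_left] at this
          linear_combination R * this
  calc u N ≤ R * (1 + a) ^ N := hpow N le_rfl
    _ ≤ R * exp a ^ N := by gcongr; linarith [add_one_le_exp a]
    _ = R * exp (a * N) := by rw [mul_comm a, exp_nat_mul]

theorem norm_apply_add_le_of_norm_comp_le {𝕜 X : Type*} [NontriviallyNormedField 𝕜]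
    [SeminormedAddCommGroup X] [NormedSpace 𝕜 X] {S A : X →L[𝕜] X} {M c : ℝ}
    (hcomm : ∀ x, A (S x) = S (A x)) (hS : ‖S‖ ≤ M) (hAS : ‖A.comp S‖ ≤ c) (x y : X) :
    ‖S (A x + y)‖ ≤ c * ‖x‖ + M * ‖y‖ := by
  rw [map_add, ← hcomm, ← A.comp_apply S]
  exact (norm_add_le _ _).trans
    (add_le_add ((A.comp S).le_of_opNorm_le hAS x) (S.le_of_opNorm_le hS y))

/-- The `k`-th term bounds the contribution of one local error after `k` steps; for `k ≥ 1` the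
parabolic smoothing `‖A T_{kτ}‖ ≤ C / (kτ)` turns `‖A h‖ = O(τ)` into `O(τ / k)`. -/
noncomputable def smoothingCost (C M τ : ℝ) : ℕ → ℝ
  | 0 => C * τ
  | k + 1 => C ^ 2 * τ / (k + 1) + M * C * τ ^ 2

theorem sum_range_succ_smoothingCost (C M τ : ℝ) (n : ℕ) :
    ∑ k ∈ range (n + 1), smoothingCost C M τ k =
      C * τ + C ^ 2 * τ * harmonic n + n * (M * C * τ ^ 2) := by
  simp only [sum_range_succ', smoothingCost, sum_add_distrib, sum_const, card_range, nsmul_eq_mul,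
    harmonic, Rat.cast_sum, Rat.cast_inv, Rat.cast_natCast, mul_sum, div_eq_mul_inv]
  push_cast
  ring

theorem log_natCast_le_abs_log_add_abs_log {n : ℕ} {τ T₀ : ℝ} (hτ : 0 < τ) (hn : n * τ ≤ T₀) :
    log n ≤ |log T₀| + |log τ| := by
  rcases n.eq_zero_or_pos with rfl | hpos
  · simp only [Nat.cast_zero, log_zero]; positivity
  have hnT₀ : (n : ℝ) ≤ T₀ / τ := (le_div_iff₀ hτ).mpr hn
  have hT₀ : 0 < T₀ := (mul_pos (Nat.cast_pos.mpr hpos) hτ).trans_le hn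
  calc log n ≤ log (T₀ / τ) := log_le_log (by positivity) hnT₀
    _ = log T₀ - log τ := log_div hT₀.ne' hτ.ne'
    _ ≤ |log T₀| + |log τ| := by linarith [le_abs_self (log T₀), neg_le_abs (log τ)]

theorem sum_range_smoothingCost_le {C M τ T₀ : ℝ} (hC : 0 ≤ C) (hM : 0 ≤ M) (hτ : 0 < τ)
    (hT₀ : 0 ≤ T₀) {n : ℕ} (hn : n * τ ≤ T₀) :
    ∑ k ∈ range n, smoothingCost C M τ k ≤
      (C + C ^ 2 * (1 + |log T₀|) + M * C * T₀) * τ * (1 + |log τ|) := by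
  have hlogτ : 0 ≤ |log τ| := abs_nonneg _
  cases n with
  | zero => simp only [range_zero, sum_empty]; positivity
  | succ n =>
    push_cast at hn
    have hharm : (harmonic n : ℝ) ≤ 1 + |log T₀| + |log τ| := by
      linarith [harmonic_le_one_add_log n,
        log_natCast_le_abs_log_add_abs_log hτ (by nlinarith : (n : ℝ) * τ ≤ T₀)]
    have hnτ : n * (M * C * τ ^ 2) ≤ M * C * T₀ * τ := by
      have : (n : ℝ) * τ * (M * C * τ) ≤ T₀ * (M * C * τ) := by gcongr; linarith
      linarith
    rw [sum_range_succ_smoothingCost]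
    calc C * τ + C ^ 2 * τ * harmonic n + n * (M * C * τ ^ 2)
        ≤ C * τ + C ^ 2 * τ * (1 + |log T₀| + |log τ|) + M * C * T₀ * τ := by gcongr
      _ ≤ (C + C ^ 2 * (1 + |log T₀|) + M * C * T₀) * τ * (1 + |log τ|) := by
        have : 0 ≤ (C + C ^ 2 * |log T₀| + M * C * T₀) * τ * |log τ| := by positivity
        linarith

section Semigroup

variable {X : Type*} [NormedAddCommGroup X] [NormedSpace ℝ X] {T : ℝ → X →L[ℝ] X}
  {A : X →L[ℝ] X} {T₀ M C L τ : ℝ}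

theorem norm_semigroup_apply_le_smoothingCost (h0 : T 0 = ContinuousLinearMap.id ℝ X)
    (hTM : ∀ t ∈ Set.Icc (0 : ℝ) T₀, ‖T t‖ ≤ M)
    (hcomm : ∀ t ∈ Set.Icc (0 : ℝ) T₀, ∀ x : X, A (T t x) = T t (A x))
    (hAT : ∀ t ∈ Set.Ioc (0 : ℝ) T₀, ‖A.comp (T t)‖ ≤ C / t) (hM : 0 ≤ M) (hC : 0 ≤ C)
    (hτ : 0 < τ) {k : ℕ} (hk : k * τ ≤ T₀) {x y : X} (hx : ‖x‖ ≤ C * τ ^ 2)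
    (hy : ‖y‖ ≤ C * τ ^ 2) (hxy : ‖A x + y‖ ≤ C * τ) :
    ‖T (k * τ) (A x + y)‖ ≤ smoothingCost C M τ k := by
  cases k with
  | zero => simpa [h0, smoothingCost] using hxy
  | succ k =>
    have hkτ : 0 < ((k + 1 : ℕ) : ℝ) * τ := by positivity
    calc ‖T ((k + 1 : ℕ) * τ) (A x + y)‖ ≤ C / ((k + 1 : ℕ) * τ) * ‖x‖ + M * ‖y‖ :=
          norm_apply_add_le_of_norm_comp_le (hcomm _ ⟨hkτ.le, hk⟩) (hTM _ ⟨hkτ.le, hk⟩)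
            (hAT _ ⟨hkτ, hk⟩) x y
      _ ≤ C / ((k + 1 : ℕ) * τ) * (C * τ ^ 2) + M * (C * τ ^ 2) := by gcongr
      _ = smoothingCost C M τ (k + 1) := by
        simp only [smoothingCost]
        push_cast
        field_simp

theorem norm_error_le_mul_sum_add_sum_smoothingCost (h0 : T 0 = ContinuousLinearMap.id ℝ X)
    (hadd : ∀ s t : ℝ, 0 ≤ s → 0 ≤ t → s + t ≤ T₀ → T (s + t) = (T s).comp (T t))
    (hTM : ∀ t ∈ Set.Icc (0 : ℝ) T₀, ‖T t‖ ≤ M)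
    (hcomm : ∀ t ∈ Set.Icc (0 : ℝ) T₀, ∀ x : X, A (T t x) = T t (A x))
    (hAT : ∀ t ∈ Set.Ioc (0 : ℝ) T₀, ‖A.comp (T t)‖ ≤ C / t) (hM : 0 ≤ M) (hC : 0 ≤ C)
    (hτ : 0 < τ) {e E' h r : ℕ → X} (he0 : e 0 = 0)
    (hrec : ∀ n, e (n + 1) = T τ (e n) + E' n + A (h (n + 1)) + r (n + 1))
    (hE : ∀ n, ‖E' n‖ ≤ L * τ * ‖e n‖) (hh : ∀ n, ‖h n‖ ≤ C * τ ^ 2)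
    (hr : ∀ n, ‖r n‖ ≤ C * τ ^ 2) (hAhr : ∀ n, ‖A (h n) + r n‖ ≤ C * τ) {n : ℕ}
    (hn : n * τ ≤ T₀) :
    ‖e n‖ ≤ M * L * τ * ∑ j ∈ range n, ‖e j‖ + ∑ k ∈ range n, smoothingCost C M τ k := by
  have hkT₀ : ∀ k ∈ range n, (k : ℝ) * τ ≤ T₀ := fun k hk =>
    le_trans (by gcongr; exact_mod_cast (mem_range.mp hk).le) hn
  have hduhamel : e n = ∑ k ∈ range n,
      (T (k * τ) (E' (n - 1 - k)) + T (k * τ) (A (h (n - 1 - k + 1)) + r (n - 1 - k + 1))) := by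
    rw [eq_sum_pow_smul_of_eq_smul_add (S := T τ) he0
      (fun j => by rw [hrec, add_assoc, add_assoc]; rfl) n]
    refine sum_congr rfl fun k hk => ?_
    rw [← map_natCast_mul_eq_pow h0 hadd hτ.le (hkT₀ k hk), ContinuousLinearMap.smul_def,
      map_add]
  calc ‖e n‖ ≤ ∑ k ∈ range n, (M * L * τ * ‖e (n - 1 - k)‖ + smoothingCost C M τ k) := by
        rw [hduhamel]
        refine (norm_sum_le _ _).trans (sum_le_sum fun k hk => (norm_add_le _ _).trans ?_)
        have hkτ : (k : ℝ) * τ ∈ Set.Icc 0 T₀ := ⟨by positivity, hkT₀ k hk⟩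
        gcongr
        · calc ‖T (k * τ) (E' (n - 1 - k))‖ ≤ M * (L * τ * ‖e (n - 1 - k)‖) :=
                (T _).le_of_opNorm_le_of_le (hTM _ hkτ) (hE _)
            _ = M * L * τ * ‖e (n - 1 - k)‖ := by ring
        · exact norm_semigroup_apply_le_smoothingCost h0 hTM hcomm hAT hM hC hτ (hkT₀ k hk)
            (hh _) (hr _) (hAhr _)
    _ = M * L * τ * ∑ j ∈ range n, ‖e j‖ + ∑ k ∈ range n, smoothingCost C M τ k := by
        rw [sum_add_distrib, ← mul_sum, sum_range_reflect (fun j => ‖e j‖) n]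

end Semigroup

theorem error_accumulation_order_one_log_general
    (T₀ M C L : ℝ) (hM : 0 ≤ M) (hC : 0 ≤ C) (hL : 0 ≤ L) :
    ∃ K : ℝ,
      ∀ (X : Type*) [NormedAddCommGroup X] [NormedSpace ℝ X],
      ∀ (T : ℝ → X →L[ℝ] X) (A : X →L[ℝ] X),
      T 0 = ContinuousLinearMap.id ℝ X →
      (∀ s t : ℝ, 0 ≤ s → 0 ≤ t → s + t ≤ T₀ → T (s + t) = (T s).comp (T t)) →
      (∀ t ∈ Set.Icc (0:ℝ) T₀, ‖T t‖ ≤ M) →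
      (∀ t ∈ Set.Icc (0:ℝ) T₀, ∀ x : X, A (T t x) = T t (A x)) →
      (∀ t ∈ Set.Ioc (0:ℝ) T₀, ‖A.comp (T t)‖ ≤ C / t) →
      ∀ τ : ℝ, 0 < τ → τ ≤ min 1 T₀ →
      ∀ (e E' h r : ℕ → X),
      e 0 = 0 →
      (∀ n, e (n + 1) = T τ (e n) + E' n + A (h (n + 1)) + r (n + 1)) →
      (∀ n, ‖E' n‖ ≤ L * τ * ‖e n‖) →
      (∀ n, ‖h n‖ ≤ C * τ ^ 2) →
      (∀ n, ‖r n‖ ≤ C * τ ^ 2) →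
      (∀ n, ‖A (h n) + r n‖ ≤ C * τ) →
      ∀ n : ℕ, (n : ℝ) * τ ≤ T₀ → ‖e n‖ ≤ K * τ * (1 + |Real.log τ|) := by
  refine ⟨(C + C ^ 2 * (1 + |log T₀|) + M * C * T₀) * exp (M * L * T₀), ?_⟩
  intro X _ _ T A h0 hadd hTM hcomm hAT τ hτ hτle e E' h r he0 hrec hE hh hr hAhr n hn
  set R := (C + C ^ 2 * (1 + |log T₀|) + M * C * T₀) * τ * (1 + |log τ|) with hR
  have hT₀ : 0 ≤ T₀ := hτ.le.trans (hτle.trans (min_le_right _ _))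
  have hgronwall : ‖e n‖ ≤ R * exp (M * L * τ * n) :=
    le_mul_exp_of_le_mul_sum_add (u := fun j => ‖e j‖) (by positivity) (by positivity)
      fun k hk => by
        have hkT₀ : (k : ℝ) * τ ≤ T₀ := le_trans (by gcongr) hn
        exact (norm_error_le_mul_sum_add_sum_smoothingCost h0 hadd hTM hcomm hAT hM hC hτ he0
          hrec hE hh hr hAhr hkT₀).trans
          (add_le_add_right (sum_range_smoothingCost_le hC hM hτ hT₀ hkT₀) _)
  calc ‖e n‖ ≤ R * exp (M * L * τ * n) := hgronwall
    _ ≤ R * exp (M * L * T₀) := by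
        rw [mul_assoc (M * L), mul_comm τ]
        gcongr
    _ = _ := by rw [hR]; ring

theorem error_accumulation_order_one_log
    (T₀ M C L : ℝ) (hT₀ : 0 < T₀) (hM : 0 ≤ M) (hC : 0 ≤ C) (hL : 0 ≤ L) :
    ∃ K : ℝ,
      ∀ (X : Type*) [NormedAddCommGroup X] [NormedSpace ℝ X],
      ∀ (T : ℝ → X →L[ℝ] X) (A : X →L[ℝ] X),
      T 0 = ContinuousLinearMap.id ℝ X →
      (∀ s t : ℝ, 0 ≤ s → 0 ≤ t → s + t ≤ T₀ → T (s + t) = (T s).comp (T t)) →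
      (∀ t ∈ Set.Icc (0:ℝ) T₀, ‖T t‖ ≤ M) →
      (∀ t ∈ Set.Icc (0:ℝ) T₀, ∀ x : X, A (T t x) = T t (A x)) →
      (∀ t ∈ Set.Ioc (0:ℝ) T₀, ‖A.comp (T t)‖ ≤ C / t) →
      ∀ τ : ℝ, 0 < τ → τ ≤ min 1 T₀ →
      ∀ (e E' h r : ℕ → X),
      e 0 = 0 →
      (∀ n, e (n + 1) = T τ (e n) + E' n + A (h (n + 1)) + r (n + 1)) →
      (∀ n, ‖E' n‖ ≤ L * τ * ‖e n‖) →
      (∀ n, ‖h n‖ ≤ C * τ ^ 2) →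
      (∀ n, ‖r n‖ ≤ C * τ ^ 2) →
      (∀ n, ‖A (h n) + r n‖ ≤ C * τ) →
      ∀ n : ℕ, (n : ℝ) * τ ≤ T₀ → ‖e n‖ ≤ K * τ * (1 + |Real.log τ|) :=
  error_accumulation_order_one_log_general T₀ M C L hM hC hL
end

section
/- Fix T₀ > 0 and M, C, L ≥ 0. There is a constant K, depending only on M, C, L and T₀, such that the following holds. Let E be a real Banach space, let T : [0,T₀] → L(E) be a family of bounded linear operators with T_0 = I, T_{s+t} = T_s ∘ T_t whenever s, t, s+t ∈ [0,T₀], and ‖T_t‖ ≤ M for all t ∈ [0,T₀]; let A : E → E be a bounded linear operator with A(T_t x) = T_t(A x) for all t, x, and ‖A ∘ T_t‖ ≤ C/t for all t ∈ (0,T₀]. Let 0 < τ ≤ min(1, T₀), and let (e_n), (E_n), (h_n), (r_n) be sequences in E with e_0 = 0 and e_{n+1} = T_τ(e_n) + E_n + A(h_{n+1}) + r_{n+1} for all n, where ‖E_n‖ ≤ L τ ‖e_n‖, ‖h_n‖ ≤ C τ³, ‖r_n‖ ≤ C τ³, and ‖A(h_n) + r_n‖ ≤ C τ² for all n. Then ‖e_n‖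 ≤ K τ² (1 + |log τ|) for every n with n τ ≤ T₀. -/
/- Auxiliary: harmonic sum bound. -/
lemma harm_sum_le_aux (N : ℕ) : ∑ k ∈ Finset.range N, (1:ℝ)/(k+1) ≤ 1 + Real.log N := by
  have h := harmonic_le_one_add_log N
  have heq : ((harmonic N : ℚ) : ℝ) = ∑ k ∈ Finset.range N, (1:ℝ)/(k+1) := by
    unfold harmonic
    push_cast
    simp [one_div]
  rw [← heq]
  exact_mod_cast h

/- Auxiliary: discrete Gronwall lemma. -/
lemma gronwall_discrete_aux {a : ℕ → ℝ} {b c : ℝ} {P : ℕ → Prop}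
    (hb : 0 ≤ b) (hc : 0 ≤ c)
    (hP : ∀ n, P n → ∀ j, j < n → P j)
    (hstep : ∀ n, P n → a n ≤ b * ∑ j ∈ Finset.range n, a j + c) :
    ∀ n, P n → a n ≤ c * (1+b)^n := by
  intro n
  induction n using Nat.strong_induction_on with
  | _ n ih =>
    intro hn
    have h1 : ∑ j ∈ Finset.range n, a j ≤ ∑ j ∈ Finset.range n, c * (1+b)^j :=
      Finset.sum_le_sum fun j hj =>
        ih j (Finset.mem_range.mp hj) (hP n hn j (Finset.mem_range.mp hj))
    have h2 : (∑ j ∈ Finset.range n, (1+b)^j) * ((1+b) - 1) = (1+b)^n - 1 :=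
      geom_sum_mul _ _
    have h3 : ∑ j ∈ Finset.range n, c * (1+b)^j
        = c * ∑ j ∈ Finset.range n, (1+b)^j := by
      rw [Finset.mul_sum]
    have h4 := hstep n hn
    have h5 : b * (c * ∑ j ∈ Finset.range n, (1+b)^j) = c * ((1+b)^n - 1) := by
      rw [← h2]; ring
    have h6 : b * ∑ j ∈ Finset.range n, a j
        ≤ b * (c * ∑ j ∈ Finset.range n, (1+b)^j) := by
      rw [← h3]
      exact mul_le_mul_of_nonneg_left h1 hb
    linarith

/- Auxiliary: the per-step local-error weight. -/
noncomputable def gAux (C M τ : ℝ) : ℕ → ℝ :=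
  fun m => if m = 0 then C*τ^2 else C^2*τ^2/(m:ℝ) + M*C*τ^3

lemma gAux_zero (C M τ : ℝ) : gAux C M τ 0 = C*τ^2 := by simp [gAux]

lemma gAux_succ (C M τ : ℝ) (k : ℕ) :
    gAux C M τ (k+1) = C^2*τ^2 * ((1:ℝ)/((k:ℝ)+1)) + M*C*τ^3 := by
  simp only [gAux, Nat.succ_ne_zero, if_false]
  push_cast
  ring

/- STATEMENT 11: abstract error accumulation giving the global bound
   O(τ²(1 + |log τ|)). -/
set_option maxHeartbeats 2000000 in
theorem error_accumulation_order_two_log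
    (T₀ M C L : ℝ) (hT₀ : 0 < T₀) (hM : 0 ≤ M) (hC : 0 ≤ C) (hL : 0 ≤ L) :
    ∃ K : ℝ,
      ∀ (X : Type*) [NormedAddCommGroup X] [NormedSpace ℝ X],
      ∀ (T : ℝ → X →L[ℝ] X) (A : X →L[ℝ] X),
      T 0 = ContinuousLinearMap.id ℝ X →
      (∀ s t : ℝ, 0 ≤ s → 0 ≤ t → s + t ≤ T₀ → T (s + t) = (T s).comp (T t)) →
      (∀ t ∈ Set.Icc (0:ℝ) T₀, ‖T t‖ ≤ M) →
      (∀ t ∈ Set.Icc (0:ℝ) T₀, ∀ x : X, A (T t x) = T t (A x)) →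
      (∀ t ∈ Set.Ioc (0:ℝ) T₀, ‖A.comp (T t)‖ ≤ C / t) →
      ∀ τ : ℝ, 0 < τ → τ ≤ min 1 T₀ →
      ∀ (e E' h r : ℕ → X),
      e 0 = 0 →
      (∀ n, e (n + 1) = T τ (e n) + E' n + A (h (n + 1)) + r (n + 1)) →
      (∀ n, ‖E' n‖ ≤ L * τ * ‖e n‖) →
      (∀ n, ‖h n‖ ≤ C * τ ^ 3) →
      (∀ n, ‖r n‖ ≤ C * τ ^ 3) →
      (∀ n, ‖A (h n) + r n‖ ≤ C * τ ^ 2) →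
      ∀ n : ℕ, (n : ℝ) * τ ≤ T₀ → ‖e n‖ ≤ K * τ ^ 2 * (1 + |Real.log τ|) := by
  classical
  set B₀ : ℝ := C + C^2*(2 + |Real.log T₀|) + T₀*M*C with hB₀
  have hB₀nn : 0 ≤ B₀ := by positivity
  refine ⟨B₀ * Real.exp (M*L*T₀), ?_⟩
  intro X _ _ T A hT0 hsemi hTbd hcomm hAT τ hτ hτle e E' h r he0 herec hE hh hr hAhr
  have hτ1 : τ ≤ 1 := le_trans hτle (min_le_left _ _)
  have hτT : τ ≤ T₀ := le_trans hτle (min_le_right _ _)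
  -- Step 1: telescoping identity
  have tel : ∀ n : ℕ, (n:ℝ)*τ ≤ T₀ →
      e n = ∑ j ∈ Finset.range n,
        T (((n - (j+1) : ℕ) : ℝ) * τ) (E' j + A (h (j+1)) + r (j+1)) := by
    intro n
    induction n with
    | zero => intro _; simpa using he0
    | succ n ih =>
      intro hn
      have hn2 : ((n:ℝ)+1)*τ ≤ T₀ := by push_cast at hn; linarith
      have hn' : (n:ℝ)*τ ≤ T₀ := by nlinarith [hτ.le]
      rw [herec n, ih hn', Finset.sum_range_succ]
      have hlast : T (((n+1 - (n+1) : ℕ) : ℝ) * τ) (E' n + A (h (n+1)) + r (n+1))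
          = E' n + A (h (n+1)) + r (n+1) := by
        have hz : (n+1) - (n+1) = 0 := Nat.sub_self _
        rw [hz]
        simp [hT0]
      rw [hlast]
      have hterm : ∀ j ∈ Finset.range n,
          T (((n+1 - (j+1) : ℕ) : ℝ) * τ) (E' j + A (h (j+1)) + r (j+1))
          = T τ (T (((n - (j+1) : ℕ) : ℝ) * τ) (E' j + A (h (j+1)) + r (j+1))) := by
        intro j hj
        have hjn : j < n := Finset.mem_range.mp hj
        have h1 : (n+1 - (j+1) : ℕ) = (n - (j+1)) + 1 := by omega
        have h2 : (((n - (j+1)) + 1 : ℕ) : ℝ) * τ = τ + ((n - (j+1) : ℕ) : ℝ) * τ := by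
          push_cast; ring
        have hmn : ((n - (j+1) : ℕ) : ℝ) ≤ (n : ℝ) := by
          have hx : n - (j+1) ≤ n := by omega
          exact_mod_cast hx
        have hm1 : ((n - (j+1) : ℕ) : ℝ) + 1 ≤ (n:ℝ) + 1 := by linarith
        have hle : τ + ((n - (j+1) : ℕ) : ℝ) * τ ≤ T₀ := by
          have hmul := mul_le_mul_of_nonneg_right hm1 hτ.le
          nlinarith
        have hcomp := hsemi τ (((n - (j+1) : ℕ) : ℝ) * τ) hτ.le (by positivity) hle
        rw [h1, h2, hcomp]
        rfl
      rw [Finset.sum_congr rfl hterm, ← map_sum]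
      abel
  -- Step 2: per-term bound
  have term_bound : ∀ n : ℕ, (n:ℝ)*τ ≤ T₀ → ∀ j, j < n →
      ‖T (((n - (j+1) : ℕ) : ℝ) * τ) (E' j + A (h (j+1)) + r (j+1))‖
        ≤ M*(L*τ*‖e j‖) + gAux C M τ (n - (j+1)) := by
    intro n hn j hj
    set m : ℕ := n - (j+1) with hm
    have hmτ_nn : (0:ℝ) ≤ (m:ℝ)*τ := by positivity
    have hmn : m ≤ n := by omega
    have hmτ_le : (m:ℝ)*τ ≤ T₀ := by
      refine le_trans ?_ hn
      have : (m:ℝ) ≤ (n:ℝ) := by exact_mod_cast hmn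
      exact mul_le_mul_of_nonneg_right this hτ.le
    have hTm : ‖T ((m:ℝ)*τ)‖ ≤ M := hTbd _ ⟨hmτ_nn, hmτ_le⟩
    have split : T ((m:ℝ)*τ) (E' j + A (h (j+1)) + r (j+1))
        = T ((m:ℝ)*τ) (E' j) + T ((m:ℝ)*τ) (A (h (j+1)) + r (j+1)) := by
      rw [add_assoc, map_add]
    rw [split]
    refine le_trans (norm_add_le _ _) (add_le_add ?_ ?_)
    · calc ‖T ((m:ℝ)*τ) (E' j)‖ ≤ ‖T ((m:ℝ)*τ)‖ * ‖E' j‖ :=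
          ContinuousLinearMap.le_opNorm _ _
        _ ≤ M * (L*τ*‖e j‖) := mul_le_mul hTm (hE j) (norm_nonneg _) hM
    · rcases Nat.eq_zero_or_pos m with h0 | hpos
      · rw [h0, gAux_zero]
        simp only [Nat.cast_zero, zero_mul, hT0, ContinuousLinearMap.id_apply]
        exact hAhr (j+1)
      · have hmR : (0:ℝ) < (m:ℝ) := by exact_mod_cast hpos
        have hmem : (m:ℝ)*τ ∈ Set.Ioc (0:ℝ) T₀ := ⟨by positivity, hmτ_le⟩
        have hcm : T ((m:ℝ)*τ) (A (h (j+1)) + r (j+1))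
            = A (T ((m:ℝ)*τ) (h (j+1))) + T ((m:ℝ)*τ) (r (j+1)) := by
          rw [map_add, hcomm _ ⟨hmτ_nn, hmτ_le⟩]
        rw [hcm]
        have b1 : ‖A (T ((m:ℝ)*τ) (h (j+1)))‖ ≤ (C/((m:ℝ)*τ)) * (C*τ^3) := by
          have hre : A (T ((m:ℝ)*τ) (h (j+1)))
              = (A.comp (T ((m:ℝ)*τ))) (h (j+1)) := rfl
          rw [hre]
          calc ‖(A.comp (T ((m:ℝ)*τ))) (h (j+1))‖
              ≤ ‖A.comp (T ((m:ℝ)*τ))‖ * ‖h (j+1)‖ := ContinuousLinearMap.le_opNorm _ _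
            _ ≤ (C/((m:ℝ)*τ)) * (C*τ^3) :=
                mul_le_mul (hAT _ hmem) (hh _) (norm_nonneg _) (by positivity)
        have b2 : ‖T ((m:ℝ)*τ) (r (j+1))‖ ≤ M * (C*τ^3) := by
          calc ‖T ((m:ℝ)*τ) (r (j+1))‖ ≤ ‖T ((m:ℝ)*τ)‖ * ‖r (j+1)‖ :=
              ContinuousLinearMap.le_opNorm _ _
            _ ≤ M * (C*τ^3) := mul_le_mul hTm (hr _) (norm_nonneg _) hM
        have hgval : gAux C M τ m = C^2*τ^2/(m:ℝ) + M*C*τ^3 := by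
          simp [gAux, Nat.pos_iff_ne_zero.mp hpos]
        have hdiv : (C/((m:ℝ)*τ)) * (C*τ^3) = C^2*τ^2/(m:ℝ) := by
          field_simp
        rw [hdiv] at b1
        rw [hgval]
        refine le_trans (norm_add_le _ _) ?_
        linarith
  -- Step 3: the summed one-step inequality
  have hcnn : 0 ≤ B₀ * τ^2 * (1+|Real.log τ|) := by positivity
  have step : ∀ n : ℕ, (n:ℝ)*τ ≤ T₀ →
      ‖e n‖ ≤ (M*L*τ) * ∑ j ∈ Finset.range n, ‖e j‖
        + B₀ * τ^2 * (1+|Real.log τ|) := by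
    intro n hn
    have h1 : ‖e n‖ ≤ ∑ j ∈ Finset.range n, (M*(L*τ*‖e j‖) + gAux C M τ (n - (j+1))) := by
      rw [tel n hn]
      refine le_trans (norm_sum_le _ _) (Finset.sum_le_sum ?_)
      intro j hj
      exact term_bound n hn j (Finset.mem_range.mp hj)
    rw [Finset.sum_add_distrib] at h1
    have h2 : ∑ j ∈ Finset.range n, M*(L*τ*‖e j‖)
        = (M*L*τ) * ∑ j ∈ Finset.range n, ‖e j‖ := by
      rw [Finset.mul_sum]
      exact Finset.sum_congr rfl fun j _ => by ring
    have h3 : ∑ j ∈ Finset.range n, gAux C M τ (n - (j+1))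
        = ∑ m ∈ Finset.range n, gAux C M τ m := by
      have hcg : ∀ j ∈ Finset.range n, gAux C M τ (n - (j+1)) = gAux C M τ (n - 1 - j) := by
        intro j hj
        have hx : n - (j+1) = n - 1 - j := by omega
        rw [hx]
      rw [Finset.sum_congr rfl hcg, Finset.sum_range_reflect]
    have h4 : ∑ m ∈ Finset.range n, gAux C M τ m ≤ B₀ * τ^2 * (1+|Real.log τ|) := by
      rcases Nat.eq_zero_or_pos n with rfl | hn1
      · simpa using hcnn
      obtain ⟨N, rfl⟩ : ∃ N, n = N + 1 := ⟨n-1, by omega⟩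
      rw [Finset.sum_range_succ']
      rw [gAux_zero]
      have hsum : ∑ k ∈ Finset.range N, gAux C M τ (k+1)
          = C^2*τ^2 * (∑ k ∈ Finset.range N, (1:ℝ)/(k+1)) + (N:ℝ)*(M*C*τ^3) := by
        rw [Finset.sum_congr rfl (fun k _ => gAux_succ C M τ k), Finset.sum_add_distrib,
          ← Finset.mul_sum]
        simp [Finset.sum_const, Finset.card_range, nsmul_eq_mul]
      rw [hsum]
      have hharm := harm_sum_le_aux N
      have hn2 : ((N:ℝ)+1)*τ ≤ T₀ := by push_cast at hn; linarith
      have hNτ : (N:ℝ)*τ ≤ T₀ := by nlinarith [hτ.le]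
      have hlogN : Real.log N ≤ |Real.log T₀| + |Real.log τ| := by
        rcases Nat.eq_zero_or_pos N with rfl | hN1
        · simp only [Nat.cast_zero, Real.log_zero]
          positivity
        · have hN1R : (1:ℝ) ≤ (N:ℝ) := by exact_mod_cast hN1
          have hNle : (N:ℝ) ≤ T₀/τ := by
            rw [le_div_iff₀ hτ]
            exact hNτ
          have hlog1 := Real.log_le_log (by linarith) hNle
          rw [Real.log_div (ne_of_gt hT₀) (ne_of_gt hτ)] at hlog1
          have ha1 := le_abs_self (Real.log T₀)
          have ha2 := neg_abs_le (Real.log τ)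
          linarith
      have hH : ∑ k ∈ Finset.range N, (1:ℝ)/(k+1)
          ≤ 1 + |Real.log T₀| + |Real.log τ| := by linarith
      have hC2 : (0:ℝ) ≤ C^2*τ^2 := by positivity
      have hHmul := mul_le_mul_of_nonneg_left hH hC2
      have hNMC : (N:ℝ)*(M*C*τ^3) ≤ T₀*M*C*τ^2 := by
        have hτ2 : (0:ℝ) ≤ M*C*τ^2 := by positivity
        have := mul_le_mul_of_nonneg_right hNτ hτ2
        nlinarith
      have p1 : (0:ℝ) ≤ C^2*τ^2 := hC2
      have p2 : (0:ℝ) ≤ C^2*τ^2*|Real.log τ| := by positivity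
      have p3 : (0:ℝ) ≤ C^2*τ^2*|Real.log T₀| * |Real.log τ| := by positivity
      have p4 : (0:ℝ) ≤ C*τ^2*|Real.log τ| := by positivity
      have p5 : (0:ℝ) ≤ T₀*M*C*τ^2*|Real.log τ| := by positivity
      rw [hB₀]
      nlinarith [hHmul, hNMC, p1, p2, p3, p4, p5]
    rw [h2, h3] at h1
    linarith
  -- Step 4: Gronwall and conclusion
  have hb : 0 ≤ M*L*τ := by positivity
  have hdown : ∀ n : ℕ, (n:ℝ)*τ ≤ T₀ → ∀ j, j < n → (j:ℝ)*τ ≤ T₀ := by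
    intro n hn j hj
    refine le_trans ?_ hn
    have : (j:ℝ) ≤ (n:ℝ) := by exact_mod_cast hj.le
    exact mul_le_mul_of_nonneg_right this hτ.le
  have gron := gronwall_discrete_aux (a := fun n => ‖e n‖)
    (P := fun n => (n:ℝ)*τ ≤ T₀) hb hcnn hdown step
  intro n hn
  have hpow : (1+(M*L*τ))^n ≤ Real.exp (M*L*T₀) := by
    have h1 : (1+(M*L*τ)) ≤ Real.exp (M*L*τ) := by
      have := Real.add_one_le_exp (M*L*τ); linarith
    calc (1+(M*L*τ))^n ≤ (Real.exp (M*L*τ))^n := pow_le_pow_left₀ (by linarith) h1 n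
      _ = Real.exp ((n:ℝ)*(M*L*τ)) := (Real.exp_nat_mul _ n).symm
      _ ≤ Real.exp (M*L*T₀) := by
          apply Real.exp_le_exp.mpr
          have := mul_le_mul_of_nonneg_left hn (mul_nonneg hM hL)
          nlinarith
  calc ‖e n‖ ≤ (B₀ * τ^2 * (1+|Real.log τ|)) * (1+(M*L*τ))^n := gron n hn
    _ ≤ (B₀ * τ^2 * (1+|Real.log τ|)) * Real.exp (M*L*T₀) :=
        mul_le_mul_of_nonneg_left hpow hcnn
    _ = (B₀ * Real.exp (M*L*T₀)) * τ^2 * (1+|Real.log τ|) := by ring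
end

section
/- Fix T₀ > 0, M, C, L ≥ 0 and α ∈ (0,1]. There is a constant K, depending only on M, C, L, T₀ and α, such that the following holds. Let E be a real Banach space, let T : [0,T₀] → L(E) be a family of bounded linear operators with T_0 = I, T_{s+t} = T_s ∘ T_t whenever s, t, s+t ∈ [0,T₀], and ‖T_t‖ ≤ M for all t ∈ [0,T₀]; let A : E → E be a bounded linear operator with A(T_t x) = T_t(A x) for all t, x, and ‖A ∘ T_t‖ ≤ C/t^{1−α} for all t ∈ (0,T₀]. Let 0 < τ ≤ min(1, T₀), and let (e_n), (E_n), (h_n), (r_n) be sequences in E with e_0 = 0 and e_{n+1} = T_τ(e_n) + E_n + A(h_{n+1}) + r_{n+1} for all n, where ‖E_n‖ ≤ L τ ‖e_n‖, ‖h_n‖ ≤ C τ³, ‖r_n‖ ≤ C τ³, and ‖A(h_n) + r_n‖ ≤ C τ² for all n. Then ‖e_n‖ ≤ K τ² for every n with n τ ≤ T₀. -/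
open Finset Real
set_option maxHeartbeats 1000000

lemma aux_step {α : ℝ} (hα0 : 0 < α) (hα1 : α ≤ 1) {y : ℝ} (hy : 1 ≤ y) :
    α * y ^ (α - 1) + (y - 1) ^ α ≤ y ^ α := by
  have hy0 : 0 < y := lt_of_lt_of_le one_pos hy
  have hs : (-1 : ℝ) ≤ -(1/y) := by
    have : 1/y ≤ 1 := by rw [div_le_one hy0]; exact hy
    linarith
  have hb := rpow_one_add_le_one_add_mul_self hs hα0.le hα1
  have h1 : (1 : ℝ) + -(1/y) = (y - 1)/y := by field_simp; ring
  rw [h1] at hb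
  have h2 : ((y - 1)/y) ^ α = (y-1)^α / y^α := by
    rw [Real.div_rpow (by linarith) hy0.le]
  rw [h2] at hb
  have hyα : (0:ℝ) < y ^ α := Real.rpow_pos_of_pos hy0 _
  have h3 : (y-1)^α ≤ (1 + α * -(1/y)) * y ^ α := by
    rw [div_le_iff₀ hyα] at hb; linarith
  have h4 : (1 + α * -(1/y)) * y ^ α = y ^ α - α * y ^ (α - 1) := by
    have : y ^ (α - 1) = y ^ α / y := by
      rw [Real.rpow_sub hy0, Real.rpow_one]
    rw [this]; field_simp; ring
  rw [h4] at h3; linarith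

lemma aux_sum {α : ℝ} (hα0 : 0 < α) (hα1 : α ≤ 1) (m : ℕ) :
    ∑ i ∈ Finset.range m, ((i : ℝ) + 1) ^ (α - 1) ≤ (m : ℝ) ^ α / α := by
  induction m with
  | zero => simp [Real.zero_rpow hα0.ne']
  | succ m ih =>
    rw [Finset.sum_range_succ]
    have key := aux_step hα0 hα1 (y := (m:ℝ) + 1)
      (by linarith [Nat.cast_nonneg (α := ℝ) m])
    have hmm : ((m:ℝ) + 1) - 1 = (m:ℝ) := by ring
    rw [hmm] at key
    have : ((m:ℝ)+1) ^ (α - 1) ≤ (((m:ℝ)+1) ^ α - (m:ℝ) ^ α)/α := by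
      rw [le_div_iff₀ hα0]; nlinarith
    push_cast
    calc ∑ i ∈ Finset.range m, ((i : ℝ) + 1) ^ (α - 1) + ((m:ℝ)+1) ^ (α-1)
        ≤ (m : ℝ) ^ α / α + (((m:ℝ)+1) ^ α - (m:ℝ) ^ α)/α := add_le_add ih this
      _ = ((m:ℝ)+1) ^ α / α := by ring

/- STATEMENT 13 -/
theorem error_accumulation_order_two_fractional
    (T₀ M C L α : ℝ) (hT₀ : 0 < T₀) (hM : 0 ≤ M) (hC : 0 ≤ C) (hL : 0 ≤ L)
    (hα : α ∈ Set.Ioc (0:ℝ) 1) :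
    ∃ K : ℝ,
      ∀ (X : Type*) [NormedAddCommGroup X] [NormedSpace ℝ X],
      ∀ (T : ℝ → X →L[ℝ] X) (A : X →L[ℝ] X),
      T 0 = ContinuousLinearMap.id ℝ X →
      (∀ s t : ℝ, 0 ≤ s → 0 ≤ t → s + t ≤ T₀ → T (s + t) = (T s).comp (T t)) →
      (∀ t ∈ Set.Icc (0:ℝ) T₀, ‖T t‖ ≤ M) →
      (∀ t ∈ Set.Icc (0:ℝ) T₀, ∀ x : X, A (T t x) = T t (A x)) →
      (∀ t ∈ Set.Ioc (0:ℝ) T₀, ‖A.comp (T t)‖ ≤ C / t ^ ((1:ℝ) - α)) →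
      ∀ τ : ℝ, 0 < τ → τ ≤ min 1 T₀ →
      ∀ (e E' h r : ℕ → X),
      e 0 = 0 →
      (∀ n, e (n + 1) = T τ (e n) + E' n + A (h (n + 1)) + r (n + 1)) →
      (∀ n, ‖E' n‖ ≤ L * τ * ‖e n‖) →
      (∀ n, ‖h n‖ ≤ C * τ ^ 3) →
      (∀ n, ‖r n‖ ≤ C * τ ^ 3) →
      (∀ n, ‖A (h n) + r n‖ ≤ C * τ ^ 2) →
      ∀ n : ℕ, (n : ℝ) * τ ≤ T₀ → ‖e n‖ ≤ K * τ ^ 2 := by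
  obtain ⟨hα0, hα1⟩ := hα
  set B : ℝ := C + M*C*T₀ + C^2*T₀^α/α with hBdef
  have hB0 : 0 ≤ B := by
    have h1 : (0:ℝ) ≤ T₀ ^ α := (Real.rpow_pos_of_pos hT₀ α).le
    have : (0:ℝ) ≤ C^2*T₀^α/α := by positivity
    have : (0:ℝ) ≤ M*C*T₀ := by positivity
    simp only [hBdef]; positivity
  refine ⟨B * Real.exp (M*L*T₀), ?_⟩
  intro X _ _ T A hT0 hsemi hTbd hcomm hsmooth τ hτ hτle e E' h r he0 herec hE hh hr hAr
  have hτ1 : τ ≤ 1 := le_trans hτle (min_le_left _ _)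
  have hτT : τ ≤ T₀ := le_trans hτle (min_le_right _ _)
  -- representation formula
  have key : ∀ n : ℕ, (n:ℝ)*τ ≤ T₀ →
      e n = ∑ k ∈ Finset.range n,
        T ((↑(n-1-k) : ℝ)*τ) (E' k + A (h (k+1)) + r (k+1)) := by
    intro n
    induction n with
    | zero => intro _; simpa using he0
    | succ n ih =>
      intro hn
      have hcast : ((n+1 : ℕ):ℝ) = (n:ℝ)+1 := by push_cast; ring
      rw [hcast] at hn
      have hnτ : (n:ℝ)*τ ≤ T₀ := by nlinarith
      rw [herec n, ih hnτ, map_sum, Finset.sum_range_succ]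
      have hlast : T ((↑(n+1-1-n) : ℝ)*τ) (E' n + A (h (n+1)) + r (n+1))
          = E' n + A (h (n+1)) + r (n+1) := by
        have hz : n+1-1-n = 0 := by omega
        rw [hz]; simp [hT0]
      rw [hlast]
      have hterm : ∀ k ∈ Finset.range n,
          T τ (T ((↑(n-1-k) : ℝ)*τ) (E' k + A (h (k+1)) + r (k+1)))
          = T ((↑(n+1-1-k) : ℝ)*τ) (E' k + A (h (k+1)) + r (k+1)) := by
        intro k hk
        have hk' : k < n := Finset.mem_range.mp hk
        have e1 : n+1-1-k = (n-1-k)+1 := by omega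
        have h2 : ((n+1-1-k : ℕ):ℝ)*τ = τ + ((n-1-k:ℕ):ℝ)*τ := by
          rw [e1]; push_cast; ring
        have hjn : ((n-1-k:ℕ):ℝ) ≤ (n:ℝ) := by
          exact_mod_cast Nat.cast_le.mpr (by omega : n-1-k ≤ n)
        have hle : τ + ((n-1-k:ℕ):ℝ)*τ ≤ T₀ := by nlinarith
        have hs := hsemi τ (((n-1-k:ℕ):ℝ)*τ) hτ.le (by positivity) hle
        rw [h2, hs]; rfl
      rw [Finset.sum_congr rfl hterm]
      abel
  -- termwise norm bound
  set f : ℕ → ℝ := fun j => if j = 0 then C*τ^2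
    else C^2*τ^3*(((j:ℕ):ℝ)*τ)^(α-1) + M*C*τ^3 with hfdef
  have htermbd : ∀ (j k : ℕ), (j:ℝ)*τ ≤ T₀ →
      ‖T ((j:ℝ)*τ) (E' k + A (h (k+1)) + r (k+1))‖ ≤ M*(L*τ*‖e k‖) + f j := by
    intro j k hjT
    have hjτmem : (j:ℝ)*τ ∈ Set.Icc (0:ℝ) T₀ := ⟨by positivity, hjT⟩
    have hsplit : E' k + A (h (k+1)) + r (k+1)
        = E' k + (A (h (k+1)) + r (k+1)) := by abel
    rw [hsplit, map_add]
    refine le_trans (norm_add_le _ _) (add_le_add ?_ ?_)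
    · calc ‖T ((j:ℝ)*τ) (E' k)‖ ≤ ‖T ((j:ℝ)*τ)‖ * ‖E' k‖ :=
            (T _).le_opNorm _
        _ ≤ M * (L*τ*‖e k‖) := by
            apply mul_le_mul (hTbd _ hjτmem) (hE k) (norm_nonneg _) hM
    · rcases Nat.eq_zero_or_pos j with hj0 | hj1
      · subst hj0
        simp only [Nat.cast_zero, zero_mul, hT0]
        simpa [hfdef] using hAr (k+1)
      · have hjpos : (0:ℝ) < (j:ℝ)*τ := by
          have : (1:ℝ) ≤ (j:ℝ) := by exact_mod_cast hj1
          nlinarith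
        have hjne : j ≠ 0 := Nat.pos_iff_ne_zero.mp hj1
        rw [map_add]
        have hc1 : T ((j:ℝ)*τ) (A (h (k+1))) = A (T ((j:ℝ)*τ) (h (k+1))) :=
          (hcomm _ hjτmem _).symm
        have hb1 : ‖A (T ((j:ℝ)*τ) (h (k+1)))‖
            ≤ (C / ((j:ℝ)*τ) ^ ((1:ℝ)-α)) * (C*τ^3) := by
          have h5 : A (T ((j:ℝ)*τ) (h (k+1)))
              = (A.comp (T ((j:ℝ)*τ))) (h (k+1)) := rfl
          rw [h5]
          calc ‖(A.comp (T ((j:ℝ)*τ))) (h (k+1))‖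
              ≤ ‖A.comp (T ((j:ℝ)*τ))‖ * ‖h (k+1)‖ :=
                ContinuousLinearMap.le_opNorm _ _
            _ ≤ (C / ((j:ℝ)*τ) ^ ((1:ℝ)-α)) * (C*τ^3) := by
                apply mul_le_mul (hsmooth _ ⟨hjpos, hjT⟩) (hh (k+1))
                  (norm_nonneg _)
                positivity
        have hb2 : ‖T ((j:ℝ)*τ) (r (k+1))‖ ≤ M * (C*τ^3) := by
          calc ‖T ((j:ℝ)*τ) (r (k+1))‖ ≤ ‖T ((j:ℝ)*τ)‖ * ‖r (k+1)‖ :=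
                (T _).le_opNorm _
            _ ≤ M * (C*τ^3) := mul_le_mul (hTbd _ hjτmem) (hr (k+1))
                (norm_nonneg _) hM
        have heq : (C / ((j:ℝ)*τ) ^ ((1:ℝ)-α)) * (C*τ^3)
            = C^2*τ^3*(((j:ℕ):ℝ)*τ)^(α-1) := by
          have : ((j:ℝ)*τ) ^ (α-1) = (((j:ℝ)*τ) ^ ((1:ℝ)-α))⁻¹ := by
            rw [show α - 1 = -((1:ℝ)-α) by ring, Real.rpow_neg hjpos.le]
          rw [this]
          have hpow : (0:ℝ) < ((j:ℝ)*τ) ^ ((1:ℝ)-α) :=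
            Real.rpow_pos_of_pos hjpos _
          field_simp
        rw [hfdef]
        simp only [if_neg hjne]
        calc ‖T ((j:ℝ)*τ) (A (h (k+1))) + T ((j:ℝ)*τ) (r (k+1))‖
            ≤ ‖T ((j:ℝ)*τ) (A (h (k+1)))‖ + ‖T ((j:ℝ)*τ) (r (k+1))‖ :=
              norm_add_le _ _
          _ ≤ (C / ((j:ℝ)*τ) ^ ((1:ℝ)-α)) * (C*τ^3) + M * (C*τ^3) := by
              rw [hc1]; exact add_le_add hb1 hb2
          _ = C^2*τ^3*(((j:ℕ):ℝ)*τ)^(α-1) + M*C*τ^3 := by rw [heq]; ring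
  -- sum of f bound
  have hfsum : ∀ n : ℕ, (n:ℝ)*τ ≤ T₀ →
      ∑ j ∈ Finset.range n, f j ≤ B*τ^2 := by
    intro n hn
    rcases Nat.eq_zero_or_pos n with rfl | hn1
    · simpa using by positivity
    obtain ⟨m, rfl⟩ := Nat.exists_eq_succ_of_ne_zero (Nat.pos_iff_ne_zero.mp hn1)
    rw [Finset.sum_range_succ']
    have hf0 : f 0 = C*τ^2 := by simp [hfdef]
    have hfi : ∀ i, f (i+1) = C^2*τ^3*(((i:ℝ)+1)*τ)^(α-1) + M*C*τ^3 := by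
      intro i; rw [hfdef]; simp
    have hmT : (m:ℝ)*τ ≤ T₀ := by
      have : ((m+1:ℕ):ℝ) = (m:ℝ)+1 := by push_cast; ring
      rw [this] at hn; nlinarith
    have hsum1 : ∑ i ∈ Finset.range m, (((i:ℝ)+1)*τ)^(α-1)
        ≤ τ^(α-1) * ((m:ℝ)^α/α) := by
      have : ∀ i ∈ Finset.range m, (((i:ℝ)+1)*τ)^(α-1)
          = ((i:ℝ)+1)^(α-1) * τ^(α-1) := by
        intro i _
        rw [Real.mul_rpow (by positivity) hτ.le]
      rw [Finset.sum_congr rfl this, ← Finset.sum_mul]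
      rw [mul_comm]
      apply mul_le_mul_of_nonneg_left (aux_sum hα0 hα1 m)
        (Real.rpow_nonneg hτ.le _)
    have hτα : τ^(3:ℕ) * τ^(α-1) = τ^2 * τ^α := by
      rw [show (τ:ℝ)^(3:ℕ) = τ^((3:ℝ)) by rw [← Real.rpow_natCast]; norm_num,
        show (τ:ℝ)^(2:ℕ) = τ^((2:ℝ)) by rw [← Real.rpow_natCast]; norm_num,
        ← Real.rpow_add hτ, ← Real.rpow_add hτ]
      congr 1
      ring
    have hταm : τ^α * (m:ℝ)^α ≤ T₀^α := by
      rw [← Real.mul_rpow hτ.le (Nat.cast_nonneg m)]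
      apply Real.rpow_le_rpow (by positivity) (by nlinarith) hα0.le
    calc ∑ i ∈ Finset.range m, f (i+1) + f 0
        = C^2*τ^3 * (∑ i ∈ Finset.range m, (((i:ℝ)+1)*τ)^(α-1))
          + (m:ℝ)*(M*C*τ^3) + C*τ^2 := by
          rw [Finset.sum_congr rfl (fun i _ => hfi i), Finset.sum_add_distrib,
            ← Finset.mul_sum, hf0, Finset.sum_const, Finset.card_range]
          push_cast; ring
      _ ≤ C^2*τ^3 * (τ^(α-1) * ((m:ℝ)^α/α)) + (m:ℝ)*(M*C*τ^3) + C*τ^2 := by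
          have h6 : (0:ℝ) ≤ C^2*τ^3 := by positivity
          have h7 := mul_le_mul_of_nonneg_left hsum1 h6
          linarith
      _ ≤ B*τ^2 := by
          have e1 : C^2*τ^3 * (τ^(α-1) * ((m:ℝ)^α/α))
              = C^2 * (τ^α * (m:ℝ)^α) / α * τ^2 := by
            rw [show C^2*τ^3 * (τ^(α-1) * ((m:ℝ)^α/α))
              = C^2 * ((τ^(3:ℕ)*τ^(α-1)) * (m:ℝ)^α)/α by ring, hτα]
            ring
          have e2 : C^2 * (τ^α * (m:ℝ)^α) / α ≤ C^2 * T₀^α / α := by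
            gcongr
          have e3 : (m:ℝ)*(M*C*τ^3) ≤ M*C*T₀*τ^2 := by
            have h8 : (m:ℝ)*(M*C*τ^3) = M*C*τ^2*((m:ℝ)*τ) := by ring
            have h9 := mul_le_mul_of_nonneg_left hmT
              (show (0:ℝ) ≤ M*C*τ^2 by positivity)
            rw [h8]
            exact h9.trans_eq (by ring)
          rw [hBdef, e1]
          have e4 := mul_le_mul_of_nonneg_right e2 (sq_nonneg τ)
          have e5 : (C + M*C*T₀ + C^2*T₀^α/α)*τ^2
              = C*τ^2 + M*C*T₀*τ^2 + C^2*T₀^α/α*τ^2 := by ring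
          rw [e5]
          linarith [e3, e4]
  -- Gronwall-ready bound
  have hgronhyp : ∀ n : ℕ, (n:ℝ)*τ ≤ T₀ →
      ‖e n‖ ≤ B*τ^2 + M*L*τ * ∑ k ∈ Finset.range n, ‖e k‖ := by
    intro n hn
    rw [key n hn]
    calc ‖∑ k ∈ Finset.range n, T ((↑(n-1-k):ℝ)*τ) (E' k + A (h (k+1)) + r (k+1))‖
        ≤ ∑ k ∈ Finset.range n,
          ‖T ((↑(n-1-k):ℝ)*τ) (E' k + A (h (k+1)) + r (k+1))‖ :=
          norm_sum_le _ _
      _ ≤ ∑ k ∈ Finset.range n, (M*(L*τ*‖e k‖) + f (n-1-k)) := by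
          apply Finset.sum_le_sum
          intro k hk
          apply htermbd
          have : ((n-1-k:ℕ):ℝ) ≤ (n:ℝ) :=
            by exact_mod_cast Nat.cast_le.mpr (by omega : n-1-k ≤ n)
          nlinarith
      _ = M*L*τ * ∑ k ∈ Finset.range n, ‖e k‖
          + ∑ k ∈ Finset.range n, f (n-1-k) := by
          rw [Finset.sum_add_distrib, Finset.mul_sum]
          congr 1
          exact Finset.sum_congr rfl (fun k _ => by ring)
      _ ≤ B*τ^2 + M*L*τ * ∑ k ∈ Finset.range n, ‖e k‖ := by
          rw [Finset.sum_range_reflect]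
          have := hfsum n hn
          linarith
  -- Gronwall
  have hgron : ∀ n : ℕ, (n:ℝ)*τ ≤ T₀ → ‖e n‖ ≤ B*τ^2 * (1 + M*L*τ)^n := by
    intro n
    induction n using Nat.strong_induction_on with
    | _ n ih =>
      intro hn
      have hIH : ∀ k ∈ Finset.range n, ‖e k‖ ≤ B*τ^2 * (1 + M*L*τ)^k := by
        intro k hk
        have hk' : k < n := Finset.mem_range.mp hk
        apply ih k hk'
        have : ((k:ℕ):ℝ) ≤ (n:ℝ) := by exact_mod_cast Nat.le_of_lt hk'
        nlinarith
      have hsum : ∑ k ∈ Finset.range n, ‖e k‖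
          ≤ B*τ^2 * ∑ k ∈ Finset.range n, (1 + M*L*τ)^k := by
        rw [Finset.mul_sum]
        exact Finset.sum_le_sum hIH
      have hgeom : (∑ k ∈ Finset.range n, (1 + M*L*τ)^k) * (M*L*τ)
          = (1 + M*L*τ)^n - 1 := by
        have := geom_sum_mul (1 + M*L*τ) n
        simpa using this
      have h1 := hgronhyp n hn
      have hMLτ : (0:ℝ) ≤ M*L*τ := by positivity
      calc ‖e n‖ ≤ B*τ^2 + M*L*τ * ∑ k ∈ Finset.range n, ‖e k‖ := h1
        _ ≤ B*τ^2 + M*L*τ * (B*τ^2 * ∑ k ∈ Finset.range n, (1 + M*L*τ)^k) := by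
            nlinarith [hsum]
        _ = B*τ^2 * (1 + ((∑ k ∈ Finset.range n, (1 + M*L*τ)^k) * (M*L*τ))) := by
            ring
        _ = B*τ^2 * (1 + M*L*τ)^n := by rw [hgeom]; ring
  -- final
  intro n hn
  have h1 := hgron n hn
  have h2 : (1 + M*L*τ)^n ≤ Real.exp (M*L*T₀) := by
    calc (1 + M*L*τ)^n ≤ (Real.exp (M*L*τ))^n := by
          apply pow_le_pow_left₀ (by positivity)
            (by linarith [Real.add_one_le_exp (M*L*τ)]) n
      _ = Real.exp ((n:ℝ) * (M*L*τ)) := by rw [← Real.exp_nat_mul]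
      _ ≤ Real.exp (M*L*T₀) := by
          apply Real.exp_le_exp.mpr
          have h9 := mul_le_mul_of_nonneg_left hn (show (0:ℝ) ≤ M*L by positivity)
          nlinarith [h9]
  calc ‖e n‖ ≤ B*τ^2 * (1 + M*L*τ)^n := h1
    _ ≤ B*τ^2 * Real.exp (M*L*T₀) := by
        apply mul_le_mul_of_nonneg_left h2 (by positivity)
    _ = B * Real.exp (M*L*T₀) * τ^2 := by ring
end
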